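/- For every real α ≥ 1 there exists ℓ ≥ 1 such that, for the TSP instance on K4 with edge costs c({1,4}) = c({3,4}) = c({2,3}) = 1 and c({1,2}) = c({1,3}) = c({2,4}) = ℓ and the CARP instance obtained from it by the split-vertex construction (each vertex i replaced by two vertices i, i' joined by an edge of cost 0 and demand 1; every TSP edge {i,j} replaced by cost-c({i,j}), demand-0 edges between all copies of i and all copies of j; depot 1; capacity W = 4), the optimal CARP cost is strictly smaller than (1/α) times the minimum Hamiltonian cycle cost of the TSP instance. Consequently, an optimal or approximate solution of the constructed CARP instance does not yield an α-approximate Hamiltonian cycle, i.e., the split-vertex reduction from TSP to CARP is not approximation-preserving. -/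

import Mathlib

noncomputable section

/-- Cost of a walk: sum of edge costs over its edge traversals,
counted with multiplicity. -/
def walkCost {V : Type*} {G : SimpleGraph V} (γ : Sym2 V → ℝ)
    {u v : V} (p : G.Walk u v) : ℝ :=
  (p.edges.map γ).sum

/-- Minimum `c`-cost of a walk from `u` to `v` in `G`
(`graphDist G c u u = 0` via the trivial walk). -/
def graphDist {V : Type*} (G : SimpleGraph V) (c : Sym2 V → ℝ) (u v : V) : ℝ :=
  sInf {x : ℝ | ∃ p : G.Walk u v, walkCost c p = x}

/-- A feasible CARP solution on the complete graph on `V` with depot `v0`,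
demand function `d` and capacity `W`: a finite family of closed walks, each
through the depot, together with a serving function assigning to each walk a
set of (positive-demand) edges it traverses, of total demand at most `W`,
such that every positive-demand edge is served by exactly one walk.
(Feasibility does not depend on the edge costs.) -/
structure CARPSol (V : Type*) (v0 : V) (d : Sym2 V → ℝ) (W : ℝ) where
  n : ℕ
  walk : Fin n → (⊤ : SimpleGraph V).Walk v0 v0
  serve : Fin n → Finset (Sym2 V)
  serve_subset : ∀ i, ∀ e ∈ serve i, e ∈ (walk i).edges
  serve_pos : ∀ i, ∀ e ∈ serve i, 0 < d e
  serve_cap : ∀ i, ∑ e ∈ serve i, d e ≤ W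
  serve_unique : ∀ e : Sym2 V, 0 < d e → ∃! i, e ∈ serve i

/-- Cost of a CARP solution with respect to an edge-cost function `γ`:
the sum over its walks of their traversal costs. -/
def solCost {V : Type*} {v0 : V} {d : Sym2 V → ℝ} {W : ℝ}
    (γ : Sym2 V → ℝ) (sol : CARPSol V v0 d W) : ℝ :=
  ∑ i, walkCost γ (sol.walk i)

end

noncomputable section

/-- TSP edge costs on `K4` (vertices `1,2,3,4` represented by
`0,1,2,3 : Fin 4`): `c({1,4}) = c({3,4}) = c({2,3}) = 1` and
`c({1,2}) = c({1,3}) = c({2,4}) = ℓ`. -/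
def cTSP (ℓ : ℝ) : Sym2 (Fin 4) → ℝ :=
  fun e =>
    if e = s((0 : Fin 4), (3 : Fin 4)) ∨ e = s((2 : Fin 4), (3 : Fin 4)) ∨
        e = s((1 : Fin 4), (2 : Fin 4)) then 1
    else if e = s((0 : Fin 4), (1 : Fin 4)) ∨ e = s((0 : Fin 4), (2 : Fin 4)) ∨
        e = s((1 : Fin 4), (3 : Fin 4)) then ℓ
    else 0

/-- Vertex set of the split-vertex instance: two copies `(i,0)` and `(i,1)`
of each TSP vertex `i`. -/
abbrev SplitV : Type := Fin 4 × Fin 2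

/-- Demands of the split-vertex instance: split edges `{(i,0),(i,1)}` have
demand `1`, all other edges demand `0`. -/
def dSplit : Sym2 SplitV → ℝ :=
  fun e => if ∃ i : Fin 4, e = s((i, 0), (i, 1)) then 1 else 0

/-- Costs of the split-vertex instance obtained from the TSP costs `cTSP ℓ`:
split edges cost `0`, and every edge between a copy of `i` and a copy of `j`
(`i ≠ j`) inherits the TSP cost of `{i,j}`. -/
def cSplit (ℓ : ℝ) : Sym2 SplitV → ℝ :=
  fun e =>
    if ∃ (i : Fin 4) (a b : Fin 2), e = s((i, a), (i, b)) then 0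
    else if ∃ a b : Fin 2,
        e = s(((0 : Fin 4), a), ((3 : Fin 4), b)) ∨
        e = s(((2 : Fin 4), a), ((3 : Fin 4), b)) ∨
        e = s(((1 : Fin 4), a), ((2 : Fin 4), b)) then 1
    else ℓ

end

/-!
Only three edges of `K4` cost `1`, while a Hamiltonian cycle has four distinct edges, so every
Hamiltonian cycle pays at least `ℓ`. In the split instance a single route walks the cheap path
`1-4-3-2` through both copies of every vertex, serving all four split edges (total demand `4`),
and returns along the same path; it costs `3 + 3 = 6` whatever `ℓ` is. Taking `ℓ = 6α + 1`
gives `6 < ℓ / α`.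
-/

open SimpleGraph

section WalkCost

variable {V : Type*} {G : SimpleGraph V} {γ : Sym2 V → ℝ}

lemma le_walkCost_of_mem_edges (hγ : ∀ e, 0 ≤ γ e) {u v : V} (p : G.Walk u v)
    {e : Sym2 V} (he : e ∈ p.edges) : γ e ≤ walkCost γ p :=
  List.single_le_sum (by simpa using fun f _ => hγ f) _ (List.mem_map_of_mem he)

lemma walkCost_nonneg (hγ : ∀ e, 0 ≤ γ e) {u v : V} (p : G.Walk u v) : 0 ≤ walkCost γ p :=
  List.sum_nonneg (by simpa using fun f _ => hγ f)

lemma solCost_nonneg {v0 : V} {d : Sym2 V → ℝ} {W : ℝ} (hγ : ∀ e, 0 ≤ γ e)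
    (sol : CARPSol V v0 d W) : 0 ≤ solCost γ sol :=
  Finset.sum_nonneg fun i _ => walkCost_nonneg hγ (sol.walk i)

lemma SimpleGraph.Walk.IsHamiltonianCycle.exists_mem_edges_notMem [Fintype V] [DecidableEq V]
    {u : V} {p : G.Walk u u} (hp : p.IsHamiltonianCycle) {C : Finset (Sym2 V)}
    (hC : C.card < Fintype.card V) : ∃ e ∈ p.edges, e ∉ C := by
  have hcard : p.edges.toFinset.card = Fintype.card V := by
    rw [List.toFinset_card_of_nodup hp.isCycle.edges_nodup, Walk.length_edges, hp.length_eq]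
  obtain ⟨e, he, heC⟩ :=
    Finset.not_subset.mp fun h => (Finset.card_le_card h).not_gt (hcard ▸ hC)
  exact ⟨e, List.mem_toFinset.mp he, heC⟩

end WalkCost

def cheapEdges : Finset (Sym2 (Fin 4)) := {s(0, 3), s(2, 3), s(1, 2)}

lemma cTSP_nonneg {ℓ : ℝ} (hℓ : 0 ≤ ℓ) (e : Sym2 (Fin 4)) : 0 ≤ cTSP ℓ e := by
  unfold cTSP
  split_ifs <;> norm_num [hℓ]

lemma cTSP_eq_of_notMem_cheapEdges (ℓ : ℝ) {e : Sym2 (Fin 4)} (hd : ¬e.IsDiag)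
    (he : e ∉ cheapEdges) : cTSP ℓ e = ℓ := by
  have classify : ∀ e : Sym2 (Fin 4), ¬e.IsDiag → e ∉ cheapEdges →
      ¬(e = s(0, 3) ∨ e = s(2, 3) ∨ e = s(1, 2)) ∧
        (e = s(0, 1) ∨ e = s(0, 2) ∨ e = s(1, 3)) := by
    decide
  obtain ⟨hcheap, hexp⟩ := classify e hd he
  rw [cTSP, if_neg hcheap, if_pos hexp]

lemma le_walkCost_cTSP {ℓ : ℝ} (hℓ : 0 ≤ ℓ) {a : Fin 4}
    {p : (⊤ : SimpleGraph (Fin 4)).Walk a a} (hp : p.IsHamiltonianCycle) :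
    ℓ ≤ walkCost (cTSP ℓ) p := by
  obtain ⟨e, he, heC⟩ := hp.exists_mem_edges_notMem (C := cheapEdges) (by decide)
  have hd : ¬e.IsDiag := not_isDiag_of_mem_edgeSet _ (p.edges_subset_edgeSet he)
  simpa [cTSP_eq_of_notMem_cheapEdges ℓ hd heC] using
    le_walkCost_of_mem_edges (cTSP_nonneg hℓ) p he

def k4Cycle : (⊤ : SimpleGraph (Fin 4)).Walk 0 0 :=
  .cons (v := 1) (by decide) <| .cons (v := 2) (by decide) <|
    .cons (v := 3) (by decide) <| .cons (v := 0) (by decide) .nil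

lemma k4Cycle_isHamiltonianCycle : k4Cycle.IsHamiltonianCycle := by
  rw [Walk.isHamiltonianCycle_iff_isCycle_and_support_count_tail_eq_one]
  exact ⟨⟨⟨⟨by decide⟩, by simp [k4Cycle]⟩, by decide⟩, by decide⟩

lemma cSplit_nonneg {ℓ : ℝ} (hℓ : 0 ≤ ℓ) (e : Sym2 SplitV) : 0 ≤ cSplit ℓ e := by
  unfold cSplit
  split_ifs <;> norm_num [hℓ]

def splitTour : (⊤ : SimpleGraph SplitV).Walk (0, 0) (0, 0) :=
  .cons (v := (0, 1)) (by decide) <| .cons (v := (3, 0)) (by decide) <|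
  .cons (v := (3, 1)) (by decide) <| .cons (v := (2, 0)) (by decide) <|
  .cons (v := (2, 1)) (by decide) <| .cons (v := (1, 0)) (by decide) <|
  .cons (v := (1, 1)) (by decide) <| .cons (v := (2, 1)) (by decide) <|
  .cons (v := (3, 1)) (by decide) <| .cons (v := (0, 0)) (by decide) .nil

lemma walkCost_splitTour (ℓ : ℝ) : walkCost (cSplit ℓ) splitTour = 6 := by
  norm_num +decide [walkCost, splitTour, cSplit]

def splitTourSol : CARPSol SplitV (0, 0) dSplit 4 where
  n := 1
  walk _ := splitTour
  serve _ := Finset.univ.image fun i : Fin 4 => s((i, 0), (i, 1))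
  serve_subset := by decide
  serve_pos _ := by simp [dSplit]
  serve_cap _ := by
    rw [Finset.sum_image (by decide)]
    simp [dSplit]
  serve_unique e he := by
    obtain ⟨i, rfl⟩ : ∃ i : Fin 4, e = s((i, 0), (i, 1)) := by
      by_contra h
      simp [dSplit, h] at he
    exact ⟨0, by simp, fun j _ => Subsingleton.elim j 0⟩

lemma solCost_splitTourSol (ℓ : ℝ) : solCost (cSplit ℓ) splitTourSol = 6 :=
  (Fin.sum_univ_one _).trans (walkCost_splitTour ℓ)

lemma sInf_solCost_le (ℓ : ℝ) (hℓ : 0 ≤ ℓ) :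
    sInf {x : ℝ | ∃ sol : CARPSol SplitV (0, 0) dSplit 4,
      solCost (cSplit ℓ) sol = x} ≤ 6 := by
  refine csInf_le ⟨0, ?_⟩ ⟨splitTourSol, solCost_splitTourSol ℓ⟩
  rintro _ ⟨sol, rfl⟩
  exact solCost_nonneg (cSplit_nonneg hℓ) sol

lemma le_sInf_hamiltonianCost (ℓ : ℝ) (hℓ : 0 ≤ ℓ) :
    ℓ ≤ sInf {x : ℝ | ∃ (a : Fin 4) (p : (⊤ : SimpleGraph (Fin 4)).Walk a a),
      p.IsHamiltonianCycle ∧ walkCost (cTSP ℓ) p = x} := by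
  refine le_csInf ⟨_, 0, k4Cycle, k4Cycle_isHamiltonianCycle, rfl⟩ ?_
  rintro _ ⟨a, p, hp, rfl⟩
  exact le_walkCost_cTSP hℓ hp

/-- for every `α ≥ 1` there is `ℓ ≥ 1` such that the optimal
cost of the split-vertex CARP instance (depot the first copy of vertex `1`,
capacity `W = 4`) is strictly smaller than `1/α` times the minimum
Hamiltonian-cycle cost of the underlying `K4` TSP instance; hence the
split-vertex reduction from TSP to CARP is not approximation-preserving. -/
theorem split_reduction_not_approx_preserving :
    ∀ α : ℝ, 1 ≤ α → ∃ ℓ : ℝ, 1 ≤ ℓ ∧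
      sInf {x : ℝ | ∃ sol : CARPSol SplitV ((0 : Fin 4), (0 : Fin 2)) dSplit 4,
          solCost (cSplit ℓ) sol = x} <
        (1 / α) *
          sInf {x : ℝ | ∃ (a : Fin 4)
            (p : (⊤ : SimpleGraph (Fin 4)).Walk a a),
            p.IsHamiltonianCycle ∧ walkCost (cTSP ℓ) p = x} := by
  intro α hα
  have hα0 : 0 < α := by linarith
  have hℓ : (0 : ℝ) ≤ 6 * α + 1 := by linarith
  refine ⟨6 * α + 1, by linarith, ?_⟩
  calc _ ≤ 6 := sInf_solCost_le _ hℓ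
    _ < 1 / α * (6 * α + 1) := by
        rw [one_div_mul_eq_div, lt_div_iff₀ hα0]
        linarith
    _ ≤ _ := by gcongr; exact le_sInf_hamiltonianCost _ hℓ
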